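/- arXiv:2005.02828 — 6 statements merged into one kernel-verified Lean document; each statement's English description precedes it below -/
import Mathlib

section
/- Let G be a finite graph whose vertices are elements of N^n, and let supp(G) = {β + γ : {β, γ} ∈ E(G)}. Suppose G' is a supergraph of G on the same vertex set such that every edge {β, γ} of G' joins two vertices in the same connected component of G. Then for every edge {β, γ} of G', the vector (β + γ) mod 2 lies in the Z_2-linear span of {(α) mod 2 : α ∈ supp(G)}. -/
/-- If `H` is a supergraph of `G` on vertex set `ℕ^n` whose every edge joins two
vertices in the same connected component of `G`, then for every edge `{β,γ}` of `H`,
`(β+γ) mod 2` lies in the `ZMod 2`-span of `{(β'+γ') mod 2 : {β',γ'} ∈ E(G)}`. -/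
theorem chordal_extension_support_in_span (n : ℕ) (G H : SimpleGraph (Fin n → ℕ))
    (hGH : G ≤ H) (hcomp : ∀ β γ, H.Adj β γ → G.Reachable β γ) :
    ∀ β γ, H.Adj β γ →
      (fun i => ((β i + γ i : ℕ) : ZMod 2)) ∈
        Submodule.span (ZMod 2)
          {v : Fin n → ZMod 2 |
            ∃ β' γ', G.Adj β' γ' ∧ v = fun i => ((β' i + γ' i : ℕ) : ZMod 2)} := by
  intro β γ hβγ
  obtain ⟨p⟩ := hcomp β γ hβγ
  clear hβγ
  induction p with
  | nil =>
    rename_i u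
    have h0 : (fun i => ((u i + u i : ℕ) : ZMod 2)) = 0 := by
      funext i
      push_cast
      exact CharTwo.add_self_eq_zero _
    rw [h0]
    exact Submodule.zero_mem _
  | @cons a b c hab p ih =>
    have heq : (fun i => ((a i + c i : ℕ) : ZMod 2)) =
        (fun i => ((a i + b i : ℕ) : ZMod 2)) + (fun i => ((b i + c i : ℕ) : ZMod 2)) := by
      funext i
      simp only [Pi.add_apply]
      push_cast
      have : ((b i : ZMod 2)) + (b i : ZMod 2) = 0 := CharTwo.add_self_eq_zero _
      linear_combination -this
    rw [heq]
    exact Submodule.add_mem _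
      (Submodule.subset_span ⟨a, b, hab, rfl⟩) ih
end

section
/- Let G(V,E) be a chordal graph with maximal cliques C_1, …, C_t, and let Q be a symmetric |V| × |V| real matrix with sparsity pattern G (i.e., Q_{βγ} = 0 whenever β ≠ γ and {β,γ} ∉ E). Then Q is positive semidefinite if and only if Q can be written as Q = Σ_{i=1}^t Q_i where each Q_i is positive semidefinite and has nonzero entries only in rows and columns indexed by C_i. -/
/-- A graph is chordal if every cycle of length at least four has a chord. -/
def IsChordal {V : Type*} (G : SimpleGraph V) : Prop :=
  ∀ ⦃v : V⦄ (w : G.Walk v v), w.IsCycle → 4 ≤ w.length →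
    ∃ a b, a ∈ w.support ∧ b ∈ w.support ∧ G.Adj a b ∧ ¬ w.toSubgraph.Adj a b

/-- A maximal clique of `G`. -/
def IsMaximalClique {V : Type*} (G : SimpleGraph V) (C : Set V) : Prop :=
  G.IsClique C ∧ ∀ D, G.IsClique D → C ⊆ D → D = C

/-!
A finite chordal graph has a simplicial vertex, i.e. one whose neighbourhood is a clique
(Dirac: an inclusion-minimal separator of two nonadjacent vertices is a clique, since otherwise
shortest detours through the two sides would close up to a chordless cycle of length at least
four; induction on either side then yields two nonadjacent simplicial vertices).

Let `Q` be positive semidefinite with sparsity pattern `G` and supported on `s`, and let `v` be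
simplicial in `G[s]`. With `q` the `v`-th row of `Q` and `d = Q v v`, the pivot term `d⁻¹ q qᵀ` is
positive semidefinite and supported on the closed neighbourhood of `v` in `s`, a clique, while the
Schur complement `Q - d⁻¹ q qᵀ` is positive semidefinite, still has pattern `G`, and vanishes in
row and column `v`. Induction on `s` writes `Q` as a sum of positive semidefinite matrices
supported on cliques, each of which lies in a maximal clique. The converse holds because sums of
positive semidefinite matrices are positive semidefinite.
-/

namespace SimpleGraph

variable {V : Type*} {G : SimpleGraph V}

def IsSimplicial (G : SimpleGraph V) (v : V) : Prop := G.IsClique (G.neighborSet v)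

def ConnectedWithin (G : SimpleGraph V) (W : Set V) (x y : V) : Prop :=
  ∃ p : G.Walk x y, ∀ z ∈ p.support, z ∈ W

namespace ConnectedWithin

variable {W W' : Set V} {a x y z : V}

lemma refl (hx : x ∈ W) : G.ConnectedWithin W x x := ⟨.nil, by simpa⟩

lemma of_adj (hxy : G.Adj x y) (hx : x ∈ W) (hy : y ∈ W) : G.ConnectedWithin W x y :=
  ⟨hxy.toWalk, by simp [hx, hy]⟩

lemma left_mem (h : G.ConnectedWithin W x y) : x ∈ W :=
  let ⟨p, hp⟩ := h; hp x p.start_mem_support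

lemma right_mem (h : G.ConnectedWithin W x y) : y ∈ W :=
  let ⟨p, hp⟩ := h; hp y p.end_mem_support

lemma symm (h : G.ConnectedWithin W x y) : G.ConnectedWithin W y x :=
  let ⟨p, hp⟩ := h; ⟨p.reverse, by simpa using hp⟩

lemma trans (h₁ : G.ConnectedWithin W x y) (h₂ : G.ConnectedWithin W y z) :
    G.ConnectedWithin W x z := by
  obtain ⟨p, hp⟩ := h₁
  obtain ⟨q, hq⟩ := h₂
  refine ⟨p.append q, fun t ht => ?_⟩
  rw [Walk.mem_support_append_iff] at ht
  exact ht.elim (hp t) (hq t)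

lemma mono (h : G.ConnectedWithin W x y) (hW : W ⊆ W') : G.ConnectedWithin W' x y :=
  let ⟨p, hp⟩ := h; ⟨p, fun t ht => hW (hp t ht)⟩

lemma adj (h : G.ConnectedWithin W x y) (hyz : G.Adj y z) (hz : z ∈ W) :
    G.ConnectedWithin W x z :=
  h.trans (of_adj hyz h.right_mem hz)

lemma restrict_component (ha : G.ConnectedWithin W a x) (h : G.ConnectedWithin W x y) :
    G.ConnectedWithin {t | G.ConnectedWithin W a t} x y := by
  classical
  obtain ⟨p, hp⟩ := h
  exact ⟨p, fun t ht => ha.trans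
    ⟨p.takeUntil t ht, fun z hz => hp z (p.support_takeUntil_subset_support ht hz)⟩⟩

end ConnectedWithin

namespace Walk

lemma two_le_length_of_not_adj {x y : V} (p : G.Walk x y) (hxy : x ≠ y) (hnadj : ¬G.Adj x y) :
    2 ≤ p.length := by
  by_contra! hlt
  interval_cases h : p.length
  · exact hxy (eq_of_length_eq_zero h)
  · exact hnadj (adj_of_length_eq_one h)

lemma isChordless_of_forall_length_le {W : Set V} {x y : V} (p : G.Walk x y)
    (hp : ∀ z ∈ p.support, z ∈ W)
    (hmin : ∀ q : G.Walk x y, (∀ z ∈ q.support, z ∈ W) → p.length ≤ q.length) :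
    p.IsChordless := by
  classical
  induction p with
  | nil => simp [isChordless_iff_forall_mem_edges]
  | @cons x x₂ y h q ih =>
    simp only [support_cons, List.mem_cons, forall_eq_or_imp] at hp
    have hq : q.IsChordless := ih hp.2 fun q' hq' => by
      simpa using hmin (cons h q') (by simpa using ⟨hp.1, hq'⟩)
    -- a neighbour of `x` further along `q` would give a shortcut
    have hfirst : ∀ v (hv : v ∈ q.support), G.Adj x v → v = x₂ := by
      intro v hv hxv
      by_contra hne
      have := hmin (cons hxv (q.dropUntil v hv)) (by
        simpa using ⟨hp.1, fun z hz => hp.2 z (q.support_dropUntil_subset_support hv hz)⟩)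
      have := q.length_dropUntil_lt_length hv hne
      simp only [length_cons] at *
      omega
    rw [isChordless_iff_forall_mem_edges]
    intro u v hu hv huv
    simp only [support_cons, List.mem_cons, edges_cons] at hu hv ⊢
    rcases hu with rfl | hu <;> rcases hv with rfl | hv
    · exact absurd huv G.irrefl
    · exact .inl (by rw [hfirst v hv huv])
    · exact .inl (by rw [hfirst u hu huv.symm, Sym2.eq_swap])
    · exact .inr (hq.mem_edges hu hv huv)

end Walk

lemma ConnectedWithin.exists_isPath_isChordless {W : Set V} {x y : V}
    (h : G.ConnectedWithin W x y) :
    ∃ p : G.Walk x y, p.IsPath ∧ p.IsChordless ∧ ∀ z ∈ p.support, z ∈ W := by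
  classical
  have hex : ∃ n, ∃ p : G.Walk x y, (∀ z ∈ p.support, z ∈ W) ∧ p.length = n :=
    let ⟨p, hp⟩ := h; ⟨_, p, hp, rfl⟩
  obtain ⟨p, hpW, hpn⟩ := Nat.find_spec hex
  have hbW : ∀ z ∈ p.bypass.support, z ∈ W := fun z hz =>
    hpW z (p.support_bypass_subset_support hz)
  refine ⟨p.bypass, p.bypass_isPath, p.bypass.isChordless_of_forall_length_le hbW
    fun q hq => ?_, hbW⟩
  calc p.bypass.length ≤ p.length := p.length_bypass_le_length
    _ = Nat.find hex := hpn
    _ ≤ q.length := Nat.find_min' hex ⟨q, hq, rfl⟩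

lemma _root_.IsChordal.not_isChordless (h : IsChordal G) {v : V} {c : G.Walk v v}
    (hc : c.IsCycle) (hlen : 4 ≤ c.length) : ¬c.IsChordless := fun hchordless => by
  obtain ⟨a, b, ha, hb, hab, hnot⟩ := h c hc hlen
  exact hnot (Walk.adj_toSubgraph_iff_mem_edges.mpr (hchordless.mem_edges ha hb hab))

lemma _root_.IsChordal.induce (h : IsChordal G) (s : Set V) : IsChordal (G.induce s) := by
  intro v c hc hlen
  let e := Embedding.induce (G := G) s
  obtain ⟨a, b, ha, hb, hab, hnot⟩ :=
    h (c.map e.toHom) ((Walk.isCycle_map_iff_of_injective e.injective).mpr hc)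
      (by rwa [Walk.length_map])
  rw [Walk.support_map, List.mem_map] at ha hb
  obtain ⟨a, ha, rfl⟩ := ha
  obtain ⟨b, hb, rfl⟩ := hb
  refine ⟨a, b, ha, hb, hab, fun hc' => hnot ?_⟩
  rw [Walk.toSubgraph_map]
  exact ⟨a, b, hc', rfl, rfl⟩

/-- `p.append q` is then a chordless cycle, of length at least four unless `x` and `y` are
adjacent. -/
lemma _root_.IsChordal.adj_of_isChordless (h : IsChordal G) {x y : V} (hxy : x ≠ y)
    {p : G.Walk x y} {q : G.Walk y x} (hp : p.IsPath) (hq : q.IsPath)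
    (hpc : p.IsChordless) (hqc : q.IsChordless)
    (hpq : ∀ z ∈ p.support, z ∈ q.support → z = x ∨ z = y)
    (hcross : ∀ u ∈ p.support, ∀ v ∈ q.support, G.Adj u v → u ∈ q.support ∨ v ∈ p.support) :
    G.Adj x y := by
  by_contra hnadj
  have hp2 := p.two_le_length_of_not_adj hxy hnadj
  have hq2 := q.two_le_length_of_not_adj hxy.symm (hnadj ∘ Adj.symm)
  have hdisj : p.support.tail.Disjoint q.support.tail := by
    intro z hzp hzq
    rcases hpq z (List.mem_of_mem_tail hzp) (List.mem_of_mem_tail hzq) with rfl | rfl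
    · exact (List.nodup_cons.mp (p.cons_tail_support ▸ hp.support_nodup)).1 hzp
    · exact (List.nodup_cons.mp (q.cons_tail_support ▸ hq.support_nodup)).1 hzq
  refine h.not_isChordless (hp.isCycle_append hq hdisj (by omega))
    (by rw [Walk.length_append]; omega) ?_
  rw [Walk.isChordless_iff_forall_mem_edges]
  have hsupp : ∀ z ∈ (p.append q).support, z ∈ p.support ∨ z ∈ q.support := fun z hz =>
    (Walk.mem_support_append_iff p q).mp hz
  intro u v hu hv huv
  rw [Walk.edges_append, List.mem_append]
  rcases hsupp u hu with hu | hu <;> rcases hsupp v hv with hv | hv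
  · exact .inl (hpc.mem_edges hu hv huv)
  · rcases hcross u hu v hv huv with hu' | hv'
    exacts [.inr (hqc.mem_edges hu' hv huv), .inl (hpc.mem_edges hu hv' huv)]
  · rcases hcross v hv u hu huv.symm with hv' | hu'
    exacts [.inr (hqc.mem_edges hu hv' huv), .inl (hpc.mem_edges hu' hv huv)]
  · exact .inr (hqc.mem_edges hu hv huv)

lemma exists_adj_connectedWithin_compl {S : Set V} {s a c : V} (ha : a ∉ S)
    (hac : G.ConnectedWithin (S \ {s})ᶜ a c) (hnac : ¬G.ConnectedWithin Sᶜ a c) :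
    ∃ u, G.Adj s u ∧ G.ConnectedWithin Sᶜ a u := by
  obtain ⟨p, hp⟩ := hac
  induction p with
  | nil => exact absurd (.refl ha) hnac
  | @cons a a' c h q ih =>
    by_cases ha' : a' = s
    · exact ⟨a, ha' ▸ h.symm, .refl ha⟩
    have ha'S : a' ∉ S := fun h' => hp a' (by simp) ⟨h', ha'⟩
    have haa' : G.ConnectedWithin Sᶜ a a' := .of_adj h ha ha'S
    obtain ⟨u, hsu, hu⟩ := ih ha'S (fun h' => hnac (haa'.trans h')) fun z hz => hp z (by simp [hz])
    exact ⟨u, hsu, haa'.trans hu⟩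

lemma exists_minimal_separator [Finite V] {a b : V} (hab : a ≠ b) (hnadj : ¬G.Adj a b) :
    ∃ S : Set V, a ∉ S ∧ b ∉ S ∧ ¬G.ConnectedWithin Sᶜ a b ∧
      ∀ s ∈ S, G.ConnectedWithin (S \ {s})ᶜ a b := by
  let P : Set (Set V) := {S | a ∉ S ∧ b ∉ S ∧ ¬G.ConnectedWithin Sᶜ a b}
  have hall : {a, b}ᶜ ∈ P := by
    refine ⟨by simp, by simp, fun ⟨p, hp⟩ => ?_⟩
    cases p with
    | nil => exact hab rfl
    | cons h q =>
      rcases (by simpa using hp _ (q.start_mem_support.tail _)) with rfl | rfl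
      exacts [G.irrefl h, hnadj h]
  obtain ⟨S, -, hS⟩ := (Set.toFinite P).exists_le_minimal hall
  refine ⟨S, hS.1.1, hS.1.2.1, hS.1.2.2, fun s hs => ?_⟩
  by_contra hsep
  have := hS.2 ⟨fun h => hS.1.1 h.1, fun h => hS.1.2.1 h.1, hsep⟩ Set.sdiff_subset hs
  simp at this

lemma connectedWithin_component_union_pair {W : Set V} {a x y u w : V} (hxu : G.Adj x u)
    (hyw : G.Adj y w) (hu : G.ConnectedWithin W a u) (hw : G.ConnectedWithin W a w) :
    G.ConnectedWithin ({z | G.ConnectedWithin W a z} ∪ {x, y}) x y := by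
  have huw : G.ConnectedWithin ({z | G.ConnectedWithin W a z} ∪ {x, y}) u w :=
    (hu.restrict_component (hu.symm.trans hw)).mono Set.subset_union_left
  exact ((ConnectedWithin.of_adj hxu (by simp) huw.left_mem).trans huw).adj hyw.symm (by simp)

theorem _root_.IsChordal.isClique_of_minimal_separator (h : IsChordal G) {S : Set V} {a b : V}
    (ha : a ∉ S) (hb : b ∉ S) (hsep : ¬G.ConnectedWithin Sᶜ a b)
    (hmin : ∀ s ∈ S, G.ConnectedWithin (S \ {s})ᶜ a b) : G.IsClique S := by
  intro x hx y hy hxy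
  by_contra hnadj
  set A := {z | G.ConnectedWithin Sᶜ a z}
  set B := {z | G.ConnectedWithin Sᶜ b z}
  have hAB : ∀ u ∈ A, u ∉ B := fun u hu hv => hsep (hu.trans hv.symm)
  have hAB' : ∀ u ∈ A, ∀ v ∈ B, ¬G.Adj u v := fun u hu v hv huv =>
    hsep ((hu.adj huv hv.right_mem).trans hv.symm)
  have hA : ∀ s ∈ S, ∃ u, G.Adj s u ∧ u ∈ A := fun s hs =>
    exists_adj_connectedWithin_compl ha (hmin s hs) hsep
  have hB : ∀ s ∈ S, ∃ u, G.Adj s u ∧ u ∈ B := fun s hs =>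
    exists_adj_connectedWithin_compl hb (hmin s hs).symm (hsep ∘ ConnectedWithin.symm)
  obtain ⟨⟨ux, hxux, hux⟩, ⟨uy, hyuy, huy⟩⟩ := And.intro (hA x hx) (hA y hy)
  obtain ⟨⟨vx, hxvx, hvx⟩, ⟨vy, hyvy, hvy⟩⟩ := And.intro (hB x hx) (hB y hy)
  obtain ⟨p, hp, hpc, hpA⟩ :=
    (connectedWithin_component_union_pair hxux hyuy hux huy).exists_isPath_isChordless
  obtain ⟨q, hq, hqc, hqB⟩ :=
    (connectedWithin_component_union_pair hyvy hxvx hvy hvx).exists_isPath_isChordless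
  refine hnadj (h.adj_of_isChordless hxy hp hq hpc hqc (fun z hzp hzq => ?_) ?_)
  · rcases hpA z hzp with hzA | hz
    · rcases hqB z hzq with hzB | hz
      · exact (hAB z hzA hzB).elim
      · simpa [or_comm] using hz
    · simpa using hz
  · intro u hu v hv huv
    rcases hpA u hu with huA | hu'
    · rcases hqB v hv with hvB | hv'
      · exact (hAB' u huA v hvB huv).elim
      · rcases hv' with rfl | rfl
        exacts [.inr p.end_mem_support, .inr p.start_mem_support]
    · rcases hu' with rfl | rfl
      exacts [.inl q.end_mem_support, .inl q.start_mem_support]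

lemma isSimplicial_top (v : V) : (⊤ : SimpleGraph V).IsSimplicial v :=
  fun _ _ _ _ hxy => (top_adj _ _).mpr hxy

lemma IsSimplicial.of_induce {U : Set V} {v : U} (hv : (G.induce U).IsSimplicial v)
    (hN : G.neighborSet v ⊆ U) : G.IsSimplicial v := fun x hx y hy hxy =>
  hv (show (G.induce U).Adj v ⟨x, hN hx⟩ from hx) (show (G.induce U).Adj v ⟨y, hN hy⟩ from hy)
    fun h => hxy (congrArg Subtype.val h)

lemma IsSimplicial.isClique_insert_of_induce {s : Set V} {v : s}
    (hv : (G.induce s).IsSimplicial v) : G.IsClique (insert ↑v (G.neighborSet v ∩ s)) :=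
  isClique_insert.mpr ⟨fun x hx y hy hxy =>
    hv (show (G.induce s).Adj v ⟨x, hx.2⟩ from hx.1) (show (G.induce s).Adj v ⟨y, hy.2⟩ from hy.1)
      fun h => hxy (congrArg Subtype.val h), fun _ hx _ => hx.1⟩

lemma exists_isSimplicial_of_separator [Finite V] {S : Set V} {a b : V} (ha : a ∉ S)
    (hb : b ∉ S) (hsep : ¬G.ConnectedWithin Sᶜ a b) (hS : G.IsClique S)
    (ih : ∀ U : Set V, Nat.card U < Nat.card V → G.induce U = ⊤ ∨
      ∃ u v : U, u ≠ v ∧ ¬(G.induce U).Adj u v ∧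
        (G.induce U).IsSimplicial u ∧ (G.induce U).IsSimplicial v) :
    ∃ v, G.ConnectedWithin Sᶜ a v ∧ G.IsSimplicial v := by
  set A := {z | G.ConnectedWithin Sᶜ a z}
  have hN : ∀ v ∈ A, G.neighborSet v ⊆ A ∪ S := fun v hv z hz => by
    by_cases hzS : z ∈ S
    exacts [.inr hzS, .inl (hv.adj hz hzS)]
  have hcard : Nat.card ↥(A ∪ S) < Nat.card V := by
    rw [Nat.card_coe_set_eq]
    refine Set.ncard_lt_card fun hU => ?_
    rcases hU ▸ Set.mem_univ b with hbA | hbS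
    exacts [hsep hbA, hb hbS]
  suffices ∃ v : ↥(A ∪ S), (v : V) ∈ A ∧ (G.induce (A ∪ S)).IsSimplicial v from
    let ⟨v, hvA, hv⟩ := this
    ⟨v, hvA, hv.of_induce (hN v hvA)⟩
  rcases ih _ hcard with htop | ⟨u, v, huv, hnadj, hu, hv⟩
  · exact ⟨⟨a, .inl (.refl ha)⟩, .refl ha, htop ▸ isSimplicial_top _⟩
  · rcases u.2 with huA | huS
    · exact ⟨u, huA, hu⟩
    rcases v.2 with hvA | hvS
    · exact ⟨v, hvA, hv⟩
    exact absurd (hS huS hvS (Subtype.coe_injective.ne huv)) hnadj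

theorem _root_.IsChordal.exists_isSimplicial_pair [Finite V] (h : IsChordal G) {a b : V}
    (hab : a ≠ b) (hnadj : ¬G.Adj a b) :
    ∃ u v, u ≠ v ∧ ¬G.Adj u v ∧ G.IsSimplicial u ∧ G.IsSimplicial v := by
  induction hn : Nat.card V using Nat.strong_induction_on generalizing V with
  | _ n ih =>
  have ih' : ∀ U : Set V, Nat.card U < Nat.card V → G.induce U = ⊤ ∨
      ∃ u v : U, u ≠ v ∧ ¬(G.induce U).Adj u v ∧
        (G.induce U).IsSimplicial u ∧ (G.induce U).IsSimplicial v := by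
    intro U hU
    by_cases! hcomplete : ∀ a b : U, a ≠ b → (G.induce U).Adj a b
    · exact .inl (by ext a b; exact ⟨Adj.ne, hcomplete a b⟩)
    · obtain ⟨a', b', hab', hnadj'⟩ := hcomplete
      exact .inr (ih _ (hn ▸ hU) (h.induce U) hab' hnadj' rfl)
  obtain ⟨S, haS, hbS, hsep, hmin⟩ := exists_minimal_separator hab hnadj
  have hS := h.isClique_of_minimal_separator haS hbS hsep hmin
  obtain ⟨u, hu, hsu⟩ := exists_isSimplicial_of_separator haS hbS hsep hS ih'
  obtain ⟨v, hv, hsv⟩ := exists_isSimplicial_of_separator hbS haS (hsep ∘ .symm) hS ih'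
  exact ⟨u, v, fun huv => hsep (hu.trans (huv ▸ hv).symm),
    fun huv => hsep ((hu.adj huv hv.right_mem).trans hv.symm), hsu, hsv⟩

theorem _root_.IsChordal.exists_isSimplicial [Finite V] [Nonempty V] (h : IsChordal G) :
    ∃ v, G.IsSimplicial v := by
  by_cases! H : ∀ a b, a ≠ b → G.Adj a b
  · obtain ⟨v⟩ := ‹Nonempty V›
    exact ⟨v, fun x _ y _ hxy => H x y hxy⟩
  · obtain ⟨a, b, hab, hnadj⟩ := H
    obtain ⟨u, -, -, -, hu, -⟩ := h.exists_isSimplicial_pair hab hnadj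
    exact ⟨u, hu⟩

lemma IsClique.exists_isMaximalClique_superset [Finite V] {K : Set V} (hK : G.IsClique K) :
    ∃ D, IsMaximalClique G D ∧ K ⊆ D := by
  obtain ⟨D, hKD, hD⟩ := (Set.toFinite {D | G.IsClique D}).exists_le_maximal hK
  exact ⟨D, ⟨hD.1, fun D' hD' hDD' => (hD.2 hD' hDD').antisymm hDD'⟩, hKD⟩

end SimpleGraph

namespace Matrix

variable {n R : Type*}

def IsSupportedOn [Zero R] (M : Matrix n n R) (s : Set n) : Prop :=
  ∀ β γ, β ∉ s ∨ γ ∉ s → M β γ = 0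

def HasSparsityPattern [Zero R] (M : Matrix n n R) (G : SimpleGraph n) : Prop :=
  ∀ β γ, β ≠ γ → ¬G.Adj β γ → M β γ = 0

section Support

variable {M N : Matrix n n R} {s t : Set n}

lemma IsSupportedOn.mono [Zero R] (h : M.IsSupportedOn s) (hst : s ⊆ t) : M.IsSupportedOn t :=
  fun β γ hβγ => h β γ (hβγ.imp (mt (@hst β)) (mt (@hst γ)))

lemma IsSupportedOn.eq_zero_of_empty [Zero R] (h : M.IsSupportedOn ∅) : M = 0 := by
  ext β γ
  exact h β γ (.inl id)

lemma IsSupportedOn.add [AddZeroClass R] (hM : M.IsSupportedOn s) (hN : N.IsSupportedOn s) :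
    (M + N).IsSupportedOn s := fun β γ h => by simp [hM β γ h, hN β γ h]

lemma IsSupportedOn.hasSparsityPattern [Zero R] {G : SimpleGraph n} (h : M.IsSupportedOn s)
    (hs : G.IsClique s) : M.HasSparsityPattern G := fun β γ hβγ hnadj =>
  h β γ (not_and_or.mp fun ⟨hβ, hγ⟩ => hnadj (hs hβ hγ hβγ))

lemma HasSparsityPattern.sub [AddGroup R] {G : SimpleGraph n} (hM : M.HasSparsityPattern G)
    (hN : N.HasSparsityPattern G) : (M - N).HasSparsityPattern G := fun β γ hβγ hnadj => by
  simp [hM β γ hβγ hnadj, hN β γ hβγ hnadj]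

end Support

section Pivot

variable {Q : Matrix n n ℝ}

lemma PosSemidef.apply_eq_zero_of_diag_eq_zero (hQ : Q.PosSemidef) {v : n} (hv : Q v v = 0)
    (w : n) : Q v w = 0 := by
  classical
  have hdet := (hQ.submatrix ![v, w]).det_nonneg
  have hsymm : Q w v = Q v w := by simpa using hQ.1.apply v w
  rw [det_fin_two] at hdet
  simp only [submatrix_apply, Matrix.cons_val_zero, Matrix.cons_val_one, hv, hsymm] at hdet
  nlinarith [sq_nonneg (Q v w)]

/-- For `Q v v = 0` this is `0`, as `0⁻¹ = 0`; for positive semidefinite `Q` the row `v` then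
vanishes as well. -/
noncomputable def pivotTerm (Q : Matrix n n ℝ) (v : n) : Matrix n n ℝ :=
  (Q v v)⁻¹ • vecMulVec (Q v) (Q v)

lemma pivotTerm_apply (v β γ : n) : Q.pivotTerm v β γ = (Q v v)⁻¹ * (Q v β * Q v γ) := rfl

lemma pivotTerm_isSupportedOn {v : n} {s : Set n} (h : ∀ γ ∉ s, Q v γ = 0) :
    (Q.pivotTerm v).IsSupportedOn s := fun β γ hβγ => by
  rcases hβγ with hβ | hγ <;> simp [pivotTerm_apply, h _ ‹_›]

lemma PosSemidef.sub_pivotTerm_apply_left (hQ : Q.PosSemidef) (v γ : n) :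
    (Q - Q.pivotTerm v) v γ = 0 := by
  rw [sub_apply, pivotTerm_apply]
  rcases eq_or_ne (Q v v) 0 with hv | hv
  · simp [hQ.apply_eq_zero_of_diag_eq_zero hv]
  · field_simp
    ring

lemma PosSemidef.sub_pivotTerm_apply_right (hQ : Q.PosSemidef) (β v : n) :
    (Q - Q.pivotTerm v) β v = 0 := by
  have hsymm : Q β v = Q v β := by simpa using hQ.1.apply v β
  rw [sub_apply, pivotTerm_apply, hsymm, mul_comm (Q v β)]
  exact hQ.sub_pivotTerm_apply_left v β

lemma IsSupportedOn.sub_pivotTerm {s : Set n} (hs : Q.IsSupportedOn s) (hQ : Q.PosSemidef)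
    (v : n) : (Q - Q.pivotTerm v).IsSupportedOn (s \ {v}) := by
  intro β γ hβγ
  simp only [Set.mem_sdiff, Set.mem_singleton_iff, not_and_or, not_not] at hβγ
  rcases hβγ with (hβ | rfl) | (hγ | rfl)
  · simp [pivotTerm_apply, hs β γ (.inl hβ), hs v β (.inr hβ)]
  · exact hQ.sub_pivotTerm_apply_left β γ
  · simp [pivotTerm_apply, hs β γ (.inr hγ), hs v γ (.inr hγ)]
  · exact hQ.sub_pivotTerm_apply_right β γ

lemma PosSemidef.pivotTerm [Finite n] (hQ : Q.PosSemidef) (v : n) :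
    (Q.pivotTerm v).PosSemidef := by
  unfold Matrix.pivotTerm
  simpa using (posSemidef_vecMulVec_self_star (Q v)).smul (inv_nonneg.mpr hQ.diag_nonneg)

lemma PosSemidef.sub_pivotTerm [Fintype n] (hQ : Q.PosSemidef) (v : n) :
    (Q - Q.pivotTerm v).PosSemidef := by
  classical
  refine .of_dotProduct_mulVec_nonneg (hQ.1.sub (hQ.pivotTerm v).1) fun x => ?_
  set c := Q v ⬝ᵥ x
  set d := Q v v
  have hsymm : Qᵀ = Q := hQ.1.eq
  have hxe : x ⬝ᵥ (Q *ᵥ Pi.single v 1) = c := by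
    rw [mulVec_single_one, ← hsymm]
    simp [c, dotProduct_comm]
    rfl
  have hex : Pi.single v 1 ⬝ᵥ (Q *ᵥ x) = c := by simp [c, mulVec]
  have hee : Pi.single v 1 ⬝ᵥ (Q *ᵥ Pi.single v 1) = d := by simp [d]
  have hxPx : x ⬝ᵥ (Q.pivotTerm v *ᵥ x) = d⁻¹ * (c * c) := by
    simp [Matrix.pivotTerm, smul_mulVec, vecMulVec_mulVec, c, d, dotProduct_comm]
  have hd : (c / d) ^ 2 * d = c * c / d := by
    rcases eq_or_ne d 0 with hd | hd
    · simp [hd]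
    · field_simp
  -- completing the square: the form of `Q - pivotTerm Q v` at `x` is that of `Q` at `z`
  set z := x - (c / d) • Pi.single v 1
  have hz : x ⬝ᵥ ((Q - Q.pivotTerm v) *ᵥ x) = z ⬝ᵥ (Q *ᵥ z) := by
    simp only [z, sub_mulVec, mulVec_sub, mulVec_smul, dotProduct_sub, sub_dotProduct,
      dotProduct_smul, smul_dotProduct, hxe, hex, hee, hxPx, smul_eq_mul]
    linear_combination -hd
  simpa [hz] using hQ.dotProduct_mulVec_nonneg z

end Pivot

variable {ι : Type*} [Fintype ι]

def IsSumOfPosSemidefOn (C : ι → Set n) (Q : Matrix n n ℝ) : Prop :=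
  ∃ Qi : ι → Matrix n n ℝ, Q = ∑ i, Qi i ∧ ∀ i, (Qi i).PosSemidef ∧ (Qi i).IsSupportedOn (C i)

namespace IsSumOfPosSemidefOn

variable {C : ι → Set n} {P Q : Matrix n n ℝ}

lemma zero : (0 : Matrix n n ℝ).IsSumOfPosSemidefOn C :=
  ⟨0, by simp, fun _ => ⟨.zero, fun _ _ _ => rfl⟩⟩

lemma of_isSupportedOn (hQ : Q.PosSemidef) {i : ι} (hi : Q.IsSupportedOn (C i)) :
    Q.IsSumOfPosSemidefOn C := by
  classical
  refine ⟨Pi.single i Q, by simp, fun j => ?_⟩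
  obtain rfl | hj := eq_or_ne j i
  · simpa using ⟨hQ, hi⟩
  · simpa [hj] using ⟨PosSemidef.zero, fun _ _ _ => rfl⟩

lemma add (hP : P.IsSumOfPosSemidefOn C) (hQ : Q.IsSumOfPosSemidefOn C) :
    (P + Q).IsSumOfPosSemidefOn C := by
  obtain ⟨Ps, rfl, hPs⟩ := hP
  obtain ⟨Qs, rfl, hQs⟩ := hQ
  exact ⟨Ps + Qs, by simp [Finset.sum_add_distrib],
    fun i => ⟨(hPs i).1.add (hQs i).1, (hPs i).2.add (hQs i).2⟩⟩

lemma posSemidef (hQ : Q.IsSumOfPosSemidefOn C) : Q.PosSemidef := by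
  obtain ⟨Qi, rfl, hQi⟩ := hQ
  exact posSemidef_sum _ fun i _ => (hQi i).1

end IsSumOfPosSemidefOn

end Matrix

open SimpleGraph Matrix in
theorem IsChordal.isSumOfPosSemidefOn {V ι : Type*} [Fintype V] [Fintype ι] {G : SimpleGraph V}
    (hG : IsChordal G) {C : ι → Set V} (hC : ∀ K, G.IsClique K → ∃ i, K ⊆ C i)
    {Q : Matrix V V ℝ} (hQ : Q.PosSemidef) (hpat : Q.HasSparsityPattern G) :
    Q.IsSumOfPosSemidefOn C := by
  suffices H : ∀ s : Set V, Q.IsSupportedOn s → Q.IsSumOfPosSemidefOn C from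
    H Set.univ fun _ _ h => by simp at h
  intro s hs
  induction hk : s.ncard using Nat.strong_induction_on generalizing s Q with
  | _ k ih =>
  obtain rfl | ⟨w, hw⟩ := s.eq_empty_or_nonempty
  · rw [hs.eq_zero_of_empty]
    exact .zero
  have : Nonempty s := ⟨⟨w, hw⟩⟩
  obtain ⟨⟨v, hvs⟩, hv⟩ := (hG.induce s).exists_isSimplicial
  set K := insert v (G.neighborSet v ∩ s)
  have hK : G.IsClique K := hv.isClique_insert_of_induce
  have hrow : ∀ γ ∉ K, Q v γ = 0 := fun γ hγ => by
    by_cases hγs : γ ∈ s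
    · exact hpat v γ (fun h => hγ (.inl h.symm)) fun h => hγ (.inr ⟨h, hγs⟩)
    · exact hs v γ (.inr hγs)
  have hPK : (Q.pivotTerm v).IsSupportedOn K := pivotTerm_isSupportedOn hrow
  obtain ⟨i, hi⟩ := hC K hK
  rw [← add_sub_cancel (Q.pivotTerm v) Q]
  refine (IsSumOfPosSemidefOn.of_isSupportedOn (hQ.pivotTerm v) (hPK.mono hi)).add
    (ih _ ?_ (hQ.sub_pivotTerm v) (hpat.sub (hPK.hasSparsityPattern hK)) (s \ {v})
      (hs.sub_pivotTerm hQ v) rfl)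
  exact hk ▸ Set.ncard_sdiff_singleton_lt_of_mem hvs

theorem posSemidef_iff_clique_decomposition_general (V : Type*) [Fintype V]
    (G : SimpleGraph V) (hchord : IsChordal G) (t : ℕ) (C : Fin t → Set V)
    (hC : ∀ s : Set V, IsMaximalClique G s ↔ ∃ i, s = C i)
    (Q : Matrix V V ℝ)
    (hpat : ∀ β γ, β ≠ γ → ¬ G.Adj β γ → Q β γ = 0) :
    Q.PosSemidef ↔
      ∃ Qi : Fin t → Matrix V V ℝ, Q = ∑ i, Qi i ∧
        ∀ i, (Qi i).PosSemidef ∧ ∀ β γ, (β ∉ C i ∨ γ ∉ C i) → Qi i β γ = 0 := by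
  refine ⟨fun hQ => hchord.isSumOfPosSemidefOn (fun K hK => ?_) hQ hpat,
    Matrix.IsSumOfPosSemidefOn.posSemidef⟩
  obtain ⟨D, hD, hKD⟩ := hK.exists_isMaximalClique_superset
  obtain ⟨i, rfl⟩ := (hC D).mp hD
  exact ⟨i, hKD⟩

/-- Agler–Helton–McCullough–Rodman: a symmetric matrix with chordal sparsity pattern `G`
whose maximal cliques are `C 1, …, C t` is PSD iff it is a sum of PSD matrices each
supported on a maximal clique. -/
theorem posSemidef_iff_clique_decomposition (V : Type*) [Fintype V] [DecidableEq V]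
    (G : SimpleGraph V) (hchord : IsChordal G) (t : ℕ) (C : Fin t → Set V)
    (hC : ∀ s : Set V, IsMaximalClique G s ↔ ∃ i, s = C i)
    (Q : Matrix V V ℝ) (hsym : Q.IsSymm)
    (hpat : ∀ β γ, β ≠ γ → ¬ G.Adj β γ → Q β γ = 0) :
    Q.PosSemidef ↔
      ∃ Qi : Fin t → Matrix V V ℝ, Q = ∑ i, Qi i ∧
        ∀ i, (Qi i).PosSemidef ∧ ∀ β γ, (β ∉ C i ∨ γ ∉ C i) → Qi i β γ = 0 :=
  posSemidef_iff_clique_decomposition_general V G hchord t C hC Q hpat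
end

section
/- The PSD completable cone Π_G(S_+^{|V|}) and the cone S_+^{|V|} ∩ S_G of PSD matrices with sparsity pattern G form a pair of dual cones inside the space S_G of symmetric matrices with sparsity pattern G, with respect to the trace inner product. -/
open Matrix

/-!
On matrices supported on `G` the trace pairing ignores the entries that `Π_G` discards, so
`⟨Q, Π_G P⟩ = ⟨Q, P⟩` for `Q ∈ S_G`. Testing against the rank-one matrices `x xᵀ` then shows
that the dual of `Π_G(S_+)` is `S_+ ∩ S_G`.

For the other duality, `Π_G(S_+)` is a closed convex cone: `Π_G` preserves the trace, and PSD
matrices of bounded trace form a compact set. A matrix `Q ∈ S_G` outside it is separated by a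
functional `A ↦ ⟨Y, A⟩`, and projecting `Y + Yᵀ` to `S_G` gives a matrix of `S_+ ∩ S_G` (by the
first duality) that pairs negatively with `Q`.
-/

instance Matrix.instLocallyConvexSpace {m n 𝕜 E : Type*} [Semiring 𝕜] [PartialOrder 𝕜]
    [AddCommMonoid E] [Module 𝕜 E] [TopologicalSpace E] [LocallyConvexSpace 𝕜 E] :
    LocallyConvexSpace 𝕜 (Matrix m n E) :=
  inferInstanceAs (LocallyConvexSpace 𝕜 (m → n → E))

namespace Matrix

section Trace

variable {m n R : Type*} [Fintype m] [Fintype n]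

theorem trace_transpose_mul_eq_sum [NonUnitalNonAssocSemiring R] (A B : Matrix m n R) :
    trace (Aᵀ * B) = ∑ i, ∑ j, A i j * B i j := by
  simp only [trace, diag, mul_apply, transpose_apply]
  exact Finset.sum_comm

variable [CommSemiring R]

theorem trace_transpose_mul_comm (A B : Matrix m n R) : trace (Aᵀ * B) = trace (Bᵀ * A) := by
  rw [← trace_transpose, transpose_mul, transpose_transpose]

theorem IsSymm.trace_transpose_mul {B : Matrix n n R} (hB : B.IsSymm) (A : Matrix n n R) :
    trace (Aᵀ * B) = trace (A * B) := by
  conv_rhs => rw [← Matrix.trace_transpose_mul, hB.eq]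

theorem dotProduct_mulVec_eq_trace_transpose_mul_vecMulVec (Q : Matrix n n R) (x : n → R) :
    x ⬝ᵥ Q *ᵥ x = trace (Qᵀ * vecMulVec x x) := by
  simp only [trace_transpose_mul_eq_sum, vecMulVec_apply, dotProduct, mulVec, Finset.mul_sum]
  exact Finset.sum_congr rfl fun i _ => Finset.sum_congr rfl fun j _ => by ring

theorem exists_trace_transpose_mul_eq [DecidableEq m] [DecidableEq n]
    (f : Matrix m n R →ₗ[R] R) : ∃ Y : Matrix m n R, ∀ A, f A = trace (Yᵀ * A) := by
  refine ⟨of fun i j => f (single i j 1), fun A => ?_⟩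
  conv_lhs => rw [matrix_eq_sum_single A]
  simp only [map_sum, trace_transpose_mul_eq_sum, of_apply]
  refine Finset.sum_congr rfl fun i _ => Finset.sum_congr rfl fun j _ => ?_
  rw [show single i j (A i j) = A i j • single i j 1 by simp [smul_single], map_smul,
    smul_eq_mul, mul_comm]

end Trace

section PosSemidef

theorem PosSemidef.isSymm {n R : Type*} [CommRing R] [PartialOrder R] [StarRing R]
    [TrivialStar R] {P : Matrix n n R} (hP : P.PosSemidef) : P.IsSymm :=
  isHermitian_iff_isSymm.mp hP.isHermitian

variable {n : Type*} [Fintype n]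

open scoped ComplexOrder MatrixOrder in
theorem PosSemidef.trace_mul_nonneg {𝕜 : Type*} [RCLike 𝕜] {A B : Matrix n n 𝕜}
    (hA : A.PosSemidef) (hB : B.PosSemidef) : 0 ≤ trace (A * B) := by
  classical
  obtain ⟨C, rfl⟩ := CStarAlgebra.nonneg_iff_eq_star_mul_self.mp hB.nonneg
  rw [star_eq_conjTranspose, ← Matrix.mul_assoc, trace_mul_comm, ← Matrix.mul_assoc]
  exact (hA.mul_mul_conjTranspose_same C).trace_nonneg

theorem PosSemidef.abs_apply_le_trace {P : Matrix n n ℝ} (hP : P.PosSemidef) (i j : n) :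
    |P i j| ≤ trace P := by
  have hquad (s : ℝ) : 0 ≤ P i i + 2 * s * P i j + s ^ 2 * P j j := by
    have := (hP.submatrix ![i, j]).dotProduct_mulVec_nonneg ![1, s]
    simp only [dotProduct, mulVec, submatrix_apply, Fin.sum_univ_two, Pi.star_apply,
      star_trivial, cons_val_zero, cons_val_one, cons_val_fin_one, mul_one, one_mul,
      hP.isSymm.apply i j] at this
    linarith
  have hdiag (k : n) : P k k ≤ trace P :=
    Finset.single_le_sum (f := fun k => P k k) (fun k _ => hP.diag_nonneg) (Finset.mem_univ k)
  rw [abs_le]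
  constructor <;> linarith [hquad 1, hquad (-1), hdiag i, hdiag j]

theorem isClosed_setOf_posSemidef : IsClosed {P : Matrix n n ℝ | P.PosSemidef} := by
  have : {P : Matrix n n ℝ | P.PosSemidef} =
      {P | Pᴴ = P} ∩ ⋂ x : n → ℝ, {P | 0 ≤ star x ⬝ᵥ P *ᵥ x} := by
    ext P
    simp [posSemidef_iff_dotProduct_mulVec, IsHermitian]
  rw [this]
  refine (isClosed_eq continuous_id.matrix_conjTranspose continuous_id).inter
    (isClosed_iInter fun x => isClosed_le continuous_const ?_)
  exact continuous_const.dotProduct (continuous_id.matrix_mulVec continuous_const)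

theorem isCompact_setOf_posSemidef_trace_le (t : ℝ) :
    IsCompact {P : Matrix n n ℝ | P.PosSemidef ∧ trace P ≤ t} := by
  have hbox : IsCompact (Set.univ.pi fun _ : n => Set.univ.pi fun _ : n => Set.Icc (-t) t) :=
    isCompact_univ_pi fun _ => isCompact_univ_pi fun _ => isCompact_Icc
  refine hbox.of_isClosed_subset (isClosed_setOf_posSemidef.inter
    (isClosed_le continuous_id.matrix_trace continuous_const)) ?_
  rintro P ⟨hP, ht⟩
  simp only [Set.mem_pi, Set.mem_univ, Set.mem_Icc, forall_const]
  exact fun i j => abs_le.mp ((hP.abs_apply_le_trace i j).trans ht)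

end PosSemidef

end Matrix

namespace SimpleGraph

variable {V R : Type*} (G : SimpleGraph V) [DecidableRel G.Adj]

def SupportsMatrix [Zero R] (Q : Matrix V V R) : Prop :=
  ∀ β γ, β ≠ γ → ¬ G.Adj β γ → Q β γ = 0

variable [DecidableEq V]

/-- The coordinate projection `Π_G`. -/
def matrixProj (R : Type*) [Semiring R] : Matrix V V R →ₗ[R] Matrix V V R where
  toFun P := of fun β γ => if β = γ ∨ G.Adj β γ then P β γ else 0
  map_add' P Q := by ext β γ; by_cases h : β = γ ∨ G.Adj β γ <;> simp [h]
  map_smul' c P := by ext β γ; by_cases h : β = γ ∨ G.Adj β γ <;> simp [h]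

section Semiring

variable [Semiring R]

@[simp]
theorem matrixProj_apply (P : Matrix V V R) (β γ : V) :
    G.matrixProj R P β γ = if β = γ ∨ G.Adj β γ then P β γ else 0 := rfl

theorem supportsMatrix_matrixProj (P : Matrix V V R) : G.SupportsMatrix (G.matrixProj R P) :=
  fun β γ hne hadj => by simp [hne, hadj]

theorem isSymm_matrixProj {P : Matrix V V R} (hP : P.IsSymm) : (G.matrixProj R P).IsSymm :=
  IsSymm.ext fun β γ => by simp [eq_comm, G.adj_comm, hP.apply]

theorem trace_matrixProj [Fintype V] (P : Matrix V V R) :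
    trace (G.matrixProj R P) = trace P := by
  simp [trace]

end Semiring

variable [Fintype V]

section CommSemiring

variable [CommSemiring R]

theorem trace_transpose_mul_matrixProj {Q : Matrix V V R} (hQ : G.SupportsMatrix Q)
    (P : Matrix V V R) : trace (Qᵀ * G.matrixProj R P) = trace (Qᵀ * P) := by
  simp only [trace_transpose_mul_eq_sum, matrixProj_apply]
  refine Finset.sum_congr rfl fun β _ => Finset.sum_congr rfl fun γ _ => ?_
  by_cases h : β = γ ∨ G.Adj β γ
  · rw [if_pos h]
  · push Not at h
    simp [hQ β γ h.1 h.2]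

theorem trace_transpose_mul_matrixProj_add_transpose {X : Matrix V V R} (hXs : X.IsSymm)
    (hX : G.SupportsMatrix X) (Y : Matrix V V R) :
    trace ((G.matrixProj R (Y + Yᵀ))ᵀ * X) = 2 * trace (Yᵀ * X) := by
  rw [trace_transpose_mul_comm, G.trace_transpose_mul_matrixProj hX, trace_transpose_mul_comm,
    transpose_add, transpose_transpose, Matrix.add_mul, trace_add, ← hXs.trace_transpose_mul Y,
    two_mul]

end CommSemiring

theorem posSemidef_iff_forall_trace_matrixProj_nonneg {Q : Matrix V V ℝ} (hQs : Q.IsSymm)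
    (hQ : G.SupportsMatrix Q) :
    Q.PosSemidef ↔ ∀ P : Matrix V V ℝ, P.PosSemidef → 0 ≤ trace (Qᵀ * G.matrixProj ℝ P) := by
  simp_rw [G.trace_transpose_mul_matrixProj hQ, hQs.eq]
  refine ⟨fun hQpsd P hP => hQpsd.trace_mul_nonneg hP, fun h => ?_⟩
  refine .of_dotProduct_mulVec_nonneg (isHermitian_iff_isSymm.mpr hQs) fun x => ?_
  simpa [dotProduct_mulVec_eq_trace_transpose_mul_vecMulVec, hQs.eq] using
    h _ (posSemidef_vecMulVec_self_star x)

theorem isClosed_image_matrixProj_posSemidef :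
    IsClosed (G.matrixProj ℝ '' {P : Matrix V V ℝ | P.PosSemidef}) := by
  refine isClosed_of_closure_subset fun Q hQ => ?_
  set t := trace Q + 1
  have hQt : Q ∈ {A : Matrix V V ℝ | trace A < t} := by simp [t]
  have hopen : IsOpen {A : Matrix V V ℝ | trace A < t} :=
    isOpen_lt continuous_id.matrix_trace continuous_const
  have hsub : {A : Matrix V V ℝ | trace A < t} ∩ G.matrixProj ℝ '' {P | P.PosSemidef} ⊆
      G.matrixProj ℝ '' {P | P.PosSemidef ∧ trace P ≤ t} := by
    rintro _ ⟨ht, P, hP, rfl⟩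
    exact ⟨P, ⟨hP, ((G.trace_matrixProj P).symm.trans_lt ht).le⟩, rfl⟩
  have hcpt := (isCompact_setOf_posSemidef_trace_le t).image
    (G.matrixProj ℝ).continuous_of_finiteDimensional
  obtain ⟨P, hP, hPQ⟩ := closure_minimal hsub hcpt.isClosed (hopen.inter_closure ⟨hQt, hQ⟩)
  exact ⟨P, hP.1, hPQ⟩

def completableCone : ProperCone ℝ (Matrix V V ℝ) where
  carrier := G.matrixProj ℝ '' {P | P.PosSemidef}
  add_mem' := by
    rintro _ _ ⟨P, hP, rfl⟩ ⟨P', hP', rfl⟩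
    exact ⟨P + P', hP.add hP', map_add _ P P'⟩
  zero_mem' := ⟨0, .zero, map_zero _⟩
  smul_mem' := by
    rintro c _ ⟨P, hP, rfl⟩
    exact ⟨(c : ℝ) • P, hP.smul c.2, by rw [map_smul]; rfl⟩
  isClosed' := G.isClosed_image_matrixProj_posSemidef

theorem exists_posSemidef_trace_neg_of_notMem_completableCone {Q : Matrix V V ℝ}
    (hQs : Q.IsSymm) (hQ : G.SupportsMatrix Q) (hQC : Q ∉ G.completableCone) :
    ∃ Z : Matrix V V ℝ, Z.IsSymm ∧ G.SupportsMatrix Z ∧ Z.PosSemidef ∧ trace (Qᵀ * Z) < 0 := by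
  obtain ⟨f, hfC, hfQ⟩ := G.completableCone.hyperplane_separation_point hQC
  obtain ⟨Y, hY⟩ := exists_trace_transpose_mul_eq (f : Matrix V V ℝ →ₗ[ℝ] ℝ)
  set Z := G.matrixProj ℝ (Y + Yᵀ)
  have hZs : Z.IsSymm := G.isSymm_matrixProj (isSymm_add_transpose_self Y)
  have hZ : G.SupportsMatrix Z := G.supportsMatrix_matrixProj _
  have hZf {X : Matrix V V ℝ} (hXs : X.IsSymm) (hX : G.SupportsMatrix X) :
      trace (Zᵀ * X) = 2 * f X := by
    rw [G.trace_transpose_mul_matrixProj_add_transpose hXs hX, ← hY]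
    rfl
  refine ⟨Z, hZs, hZ, (G.posSemidef_iff_forall_trace_matrixProj_nonneg hZs hZ).mpr ?_, ?_⟩
  · intro P hP
    rw [hZf (G.isSymm_matrixProj hP.isSymm) (G.supportsMatrix_matrixProj P)]
    exact mul_nonneg zero_le_two (hfC _ ⟨P, hP, rfl⟩)
  · rw [trace_transpose_mul_comm, hZf hQs hQ]
    linarith

end SimpleGraph

/-- The PSD completable cone `Π_G(S_+)` and the cone of PSD matrices with sparsity
pattern `G` are dual to each other inside `S_G` with respect to the trace inner
product. -/
theorem psd_completable_cone_dual (V : Type*) [Fintype V] [DecidableEq V]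
    (G : SimpleGraph V) [DecidableRel G.Adj] :
    let SG : Set (Matrix V V ℝ) :=
      {Q | Q.IsSymm ∧ ∀ β γ, β ≠ γ → ¬ G.Adj β γ → Q β γ = 0}
    let proj : Matrix V V ℝ → Matrix V V ℝ := fun P =>
      Matrix.of fun β γ => if β = γ ∨ G.Adj β γ then P β γ else 0
    let comp : Set (Matrix V V ℝ) := {Q | ∃ P, P.PosSemidef ∧ proj P = Q}
    let psd : Set (Matrix V V ℝ) := {Q ∈ SG | Q.PosSemidef}
    comp = {Q ∈ SG | ∀ P ∈ psd, 0 ≤ Matrix.trace (Qᵀ * P)} ∧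
      psd = {Q ∈ SG | ∀ P ∈ comp, 0 ≤ Matrix.trace (Qᵀ * P)} := by
  intro SG proj comp psd
  constructor
  · ext Q
    constructor
    · rintro ⟨P, hP, rfl⟩
      refine ⟨⟨G.isSymm_matrixProj hP.isSymm, G.supportsMatrix_matrixProj P⟩, ?_⟩
      rintro X ⟨⟨-, hX⟩, hXpsd⟩
      rw [trace_transpose_mul_comm]
      exact G.trace_transpose_mul_matrixProj hX P ▸ hXpsd.transpose.trace_mul_nonneg hP
    · rintro ⟨⟨hQs, hQ⟩, hdual⟩
      by_contra hQC
      obtain ⟨Z, hZs, hZ, hZpsd, hneg⟩ :=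
        G.exists_posSemidef_trace_neg_of_notMem_completableCone hQs hQ hQC
      exact (hdual Z ⟨⟨hZs, hZ⟩, hZpsd⟩).not_gt hneg
  · ext Q
    constructor
    · rintro ⟨⟨hQs, hQ⟩, hQpsd⟩
      refine ⟨⟨hQs, hQ⟩, ?_⟩
      rintro _ ⟨P, hP, rfl⟩
      exact (G.posSemidef_iff_forall_trace_matrixProj_nonneg hQs hQ).mp hQpsd P hP
    · rintro ⟨⟨hQs, hQ⟩, hdual⟩
      exact ⟨⟨hQs, hQ⟩, (G.posSemidef_iff_forall_trace_matrixProj_nonneg hQs hQ).mpr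
        fun P hP => hdual _ ⟨P, hP, rfl⟩⟩
end

section
/- Let Q' be a positive semidefinite symmetric matrix indexed by a finite set V ⊆ N^n, and let R ⊆ Z_2^n. Define Q by Q_{βγ} = Q'_{βγ} if r·(β+γ) ≡ 0 (mod 2) for all r ∈ R, and Q_{βγ} = 0 otherwise. Then Q is positive semidefinite. -/
open scoped Classical
open Matrix

set_option maxHeartbeats 1000000 in
/-- Zeroing out the entries `Q'_{βγ}` of a PSD matrix indexed by exponent vectors
whenever `r·(β+γ) ≢ 0 (mod 2)` for some `r ∈ R` preserves positive semidefiniteness. -/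
theorem posSemidef_of_sign_symmetry_truncation (n : ℕ) (ι : Type*) [Fintype ι]
    (m : ι → (Fin n → ℕ)) (hm : Function.Injective m)
    (R : Set (Fin n → ZMod 2)) (Q' : Matrix ι ι ℝ) (hQ' : Q'.PosSemidef) :
    Matrix.PosSemidef (Matrix.of fun β γ : ι =>
      if ∀ r ∈ R, ∑ i, r i * ((m β i + m γ i : ℕ) : ZMod 2) = 0 then Q' β γ else 0) := by
  set f : ι → ((Fin n → ZMod 2) → ZMod 2) := fun β r =>
    if r ∈ R then ∑ i, r i * ((m β i : ℕ) : ZMod 2) else 0 with hf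
  have hcond : ∀ β γ : ι,
      (∀ r ∈ R, ∑ i, r i * ((m β i + m γ i : ℕ) : ZMod 2) = 0) ↔ f β = f γ := by
    intro β γ
    constructor
    · intro h
      funext r
      simp only [hf]
      split_ifs with hr
      · have := h r hr
        have h2 : (∑ i, r i * ((m β i : ℕ) : ZMod 2)) +
            (∑ i, r i * ((m γ i : ℕ) : ZMod 2)) = 0 := by
          rw [← Finset.sum_add_distrib]
          simpa [Nat.cast_add, mul_add] using this
        have := add_eq_zero_iff_eq_neg.mp h2
        rwa [CharTwo.neg_eq] at this
      · rfl
    · intro h r hr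
      have h1 : (∑ i, r i * ((m β i : ℕ) : ZMod 2)) =
          (∑ i, r i * ((m γ i : ℕ) : ZMod 2)) := by
        have := congrFun h r
        simpa [hf, hr] using this
      have : ∑ i, r i * ((m β i + m γ i : ℕ) : ZMod 2) =
          (∑ i, r i * ((m β i : ℕ) : ZMod 2)) +
          (∑ i, r i * ((m γ i : ℕ) : ZMod 2)) := by
        rw [← Finset.sum_add_distrib]
        congr 1; funext i; push_cast; ring
      rw [this, h1, CharTwo.add_self_eq_zero]
  set D : ((Fin n → ZMod 2) → ZMod 2) → Matrix ι ι ℝ := fun c =>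
    Matrix.diagonal (fun β => if f β = c then (1 : ℝ) else 0) with hD
  have hEq : (Matrix.of fun β γ : ι =>
      if ∀ r ∈ R, ∑ i, r i * ((m β i + m γ i : ℕ) : ZMod 2) = 0 then Q' β γ else 0)
      = ∑ c, D c * Q' * (D c)ᴴ := by
    ext β γ
    simp only [Matrix.of_apply, hcond β γ]
    rw [Matrix.sum_apply]
    have : ∀ c, (D c * Q' * (D c)ᴴ) β γ =
        (if f β = c then (1:ℝ) else 0) * Q' β γ * (if f γ = c then (1:ℝ) else 0) := by
      intro c
      simp [hD, Matrix.diagonal_conjTranspose, Matrix.mul_apply, Matrix.diagonal_apply,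
        Finset.sum_ite_eq, Finset.mul_sum, mul_comm, mul_assoc]
    simp only [this]
    by_cases h : f β = f γ
    · rw [if_pos h, h, Finset.sum_eq_single (f γ)]
      · simp
      · intro b _ hb
        simp [Ne.symm hb]
      · simp
    · rw [if_neg h, eq_comm]
      apply Finset.sum_eq_zero
      intro c _
      by_cases h1 : f β = c
      · have h2 : f γ ≠ c := fun hh => h (h1.trans hh.symm)
        simp [h1, h2]
      · simp [h1]
  rw [hEq]
  apply Finset.sum_induction _ Matrix.PosSemidef
    (fun a b ha hb => ha.add hb) (Matrix.PosSemidef.zero)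
  intro c _
  exact hQ'.mul_mul_conjTranspose_same (D c)
end

section
/- Let σ' be an SOS polynomial in R[x] with a positive semidefinite Gram matrix Q' indexed by a finite monomial set B ⊆ N^n, and let R ⊆ Z_2^n. Define σ = (x^B)^T Q x^B where Q is obtained from Q' by zeroing out all entries Q'_{βγ} with r·(β+γ) ≢ 0 (mod 2) for some r ∈ R. Then σ is again an SOS polynomial, and every exponent α in the support of σ satisfies r·α ≡ 0 (mod 2) for all r ∈ R. -/
/-!
Let `φ β ∈ (ℤ/2)^R` record the parities `r · β` of the basis exponent `β`. Since `r · (β + γ)`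
is even iff `r · β = r · γ` in `ℤ/2`, the truncated Gram matrix is the Hadamard product of `Q'`
with the matrix `[φ β = φ γ]`, the pullback of an identity matrix along `φ`. By the Schur product
theorem it is again positive semidefinite, so `σ` is SOS. Every exponent in the support
of `σ` is some `β + γ` with `Q β γ ≠ 0`, which by construction respects all of `R`.
-/

open scoped Classical

open MvPolynomial
open scoped ComplexOrder Matrix

theorem Matrix.PosSemidef.maskFibers {ι κ 𝕜 : Type*} [RCLike 𝕜] [DecidableEq κ]
    {Q : Matrix ι ι 𝕜} (hQ : Q.PosSemidef) (φ : ι → κ) :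
    (Matrix.of fun i j => if φ i = φ j then Q i j else 0).PosSemidef := by
  convert hQ.hadamard (Matrix.PosSemidef.one.submatrix φ :
    ((1 : Matrix κ κ 𝕜).submatrix φ φ).PosSemidef) using 1
  ext i j
  simp [Matrix.one_apply]

section Gram

variable {σ ι R : Type*} [Fintype ι]

/-- The polynomial `(x^B)ᵀ Q x^B`. -/
noncomputable def gramPoly [CommSemiring R] (B : ι → σ →₀ ℕ) (Q : Matrix ι ι R) :
    MvPolynomial σ R :=
  ∑ β, ∑ γ, Q β γ • monomial (B β + B γ) 1

theorem gramPoly_transpose_mul_self [CommSemiring R] {κ : Type*} [Fintype κ]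
    (B : ι → σ →₀ ℕ) (A : Matrix κ ι R) :
    gramPoly B (Aᵀ * A) = ∑ k, (∑ β, A k β • monomial (B β) (1 : R)) ^ 2 := by
  simp only [gramPoly, sq, Fintype.sum_mul_sum, smul_mul_smul_comm, monomial_mul, one_mul,
    Matrix.mul_apply, Matrix.transpose_apply, Finset.sum_smul]
  conv_rhs => rw [Finset.sum_comm]
  exact Finset.sum_congr rfl fun _ _ => Finset.sum_comm

theorem exists_gramPoly_eq_sum_sq {Q : Matrix ι ι ℝ} (hQ : Q.PosSemidef) (B : ι → σ →₀ ℕ) :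
    ∃ f : ι → MvPolynomial σ ℝ, gramPoly B Q = ∑ i, f i ^ 2 := by
  open scoped MatrixOrder in
  obtain ⟨A, rfl⟩ := CStarAlgebra.nonneg_iff_eq_star_mul_self.mp hQ.nonneg
  exact ⟨_, gramPoly_transpose_mul_self B A⟩

theorem exists_of_mem_support_gramPoly [CommSemiring R] {B : ι → σ →₀ ℕ} {Q : Matrix ι ι R}
    {α : σ →₀ ℕ} (hα : α ∈ (gramPoly B Q).support) : ∃ β γ, Q β γ ≠ 0 ∧ α = B β + B γ := by
  obtain ⟨β, -, hβ⟩ := Finset.mem_biUnion.mp (support_sum hα)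
  obtain ⟨γ, -, hγ⟩ := Finset.mem_biUnion.mp (support_sum hβ)
  rw [smul_monomial, mem_support_iff, coeff_monomial, ite_ne_right_iff, smul_eq_mul,
    mul_one] at hγ
  exact ⟨β, γ, hγ.2, hγ.1.symm⟩

end Gram

section Parity

variable {σ : Type*} [Fintype σ]

def parityPairing (r : σ → ZMod 2) (α : σ →₀ ℕ) : ZMod 2 :=
  ∑ i, r i * (α i : ZMod 2)

theorem parityPairing_add (r : σ → ZMod 2) (α β : σ →₀ ℕ) :
    parityPairing r (α + β) = parityPairing r α + parityPairing r β := by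
  simp only [parityPairing, Finsupp.add_apply, Nat.cast_add, mul_add, Finset.sum_add_distrib]

theorem parityPairing_add_eq_zero_iff (r : σ → ZMod 2) (α β : σ →₀ ℕ) :
    parityPairing r (α + β) = 0 ↔ parityPairing r α = parityPairing r β := by
  rw [parityPairing_add, CharTwo.add_eq_zero]

end Parity

theorem sos_truncation_sign_symmetric_general (n : ℕ) (ι : Type*) [Fintype ι]
    (B : ι → (Fin n →₀ ℕ))
    (R : Set (Fin n → ZMod 2)) (Q' : Matrix ι ι ℝ) (hQ' : Q'.PosSemidef)
    (Q : Matrix ι ι ℝ)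
    (hQ : ∀ β γ, Q β γ =
      if ∀ r ∈ R, ∑ i, r i * (((B β + B γ) i : ℕ) : ZMod 2) = 0 then Q' β γ else 0) :
    (∃ (k : ℕ) (f : Fin k → MvPolynomial (Fin n) ℝ),
        (∑ β, ∑ γ, Q β γ • (MvPolynomial.monomial (B β + B γ) (1 : ℝ))) = ∑ i, f i ^ 2) ∧
    ∀ α ∈ (∑ β, ∑ γ, Q β γ • (MvPolynomial.monomial (B β + B γ) (1 : ℝ))).support,
      ∀ r ∈ R, ∑ i, r i * ((α i : ℕ) : ZMod 2) = 0 := by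
  change (∃ k f, gramPoly B Q = _) ∧
    ∀ α ∈ (gramPoly B Q).support, ∀ r ∈ R, parityPairing r α = 0
  set φ : ι → R → ZMod 2 := fun β r => parityPairing r (B β)
  have hQ_mask : Q = Matrix.of fun β γ => if φ β = φ γ then Q' β γ else 0 := by
    ext β γ
    simp only [hQ β γ, Matrix.of_apply, φ, funext_iff, Subtype.forall]
    exact if_congr (forall₂_congr fun r _ => parityPairing_add_eq_zero_iff r _ _) rfl rfl
  have hQ_psd : Q.PosSemidef := by
    rw [hQ_mask]
    exact hQ'.maskFibers φ
  refine ⟨?_, fun α hα r hr => ?_⟩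
  · obtain ⟨f, hf⟩ := exists_gramPoly_eq_sum_sq hQ_psd B
    exact ⟨_, f ∘ (Fintype.equivFin ι).symm, hf.trans (Equiv.sum_comp _ _).symm⟩
  · obtain ⟨β, γ, hQβγ, rfl⟩ := exists_of_mem_support_gramPoly hα
    rw [hQ] at hQβγ
    exact (ite_ne_right_iff.mp hQβγ).1 r hr

/-- If `σ' = (x^B)ᵀ Q' x^B` is SOS with PSD Gram matrix `Q'` and `Q` is obtained from
`Q'` by zeroing out entries violating the sign symmetries `R`, then `σ = (x^B)ᵀ Q x^B`
is again SOS and every exponent in its support respects all sign symmetries in `R`. -/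
theorem sos_truncation_sign_symmetric (n : ℕ) (ι : Type*) [Fintype ι]
    (B : ι → (Fin n →₀ ℕ)) (hB : Function.Injective B)
    (R : Set (Fin n → ZMod 2)) (Q' : Matrix ι ι ℝ) (hQ' : Q'.PosSemidef)
    (Q : Matrix ι ι ℝ)
    (hQ : ∀ β γ, Q β γ =
      if ∀ r ∈ R, ∑ i, r i * (((B β + B γ) i : ℕ) : ZMod 2) = 0 then Q' β γ else 0) :
    (∃ (k : ℕ) (f : Fin k → MvPolynomial (Fin n) ℝ),
        (∑ β, ∑ γ, Q β γ • (MvPolynomial.monomial (B β + B γ) (1 : ℝ))) = ∑ i, f i ^ 2) ∧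
    ∀ α ∈ (∑ β, ∑ γ, Q β γ • (MvPolynomial.monomial (B β + B γ) (1 : ℝ))).support,
      ∀ r ∈ R, ∑ i, r i * ((α i : ℕ) : ZMod 2) = 0 :=
  sos_truncation_sign_symmetric_general n ι B R Q' hQ' Q hQ
end

section
/- Suppose f ∈ R[x] admits a representation f = Σ_{l=1}^p (σ'_{l,0} + Σ_{j∈J_l} σ'_{l,j} g_j) with each σ'_{l,j} an SOS polynomial in the variables x(I_l), and suppose R ⊆ Z_2^n is a set of sign symmetries of A = supp(f) ∪ ∪_j supp(g_j), i.e., r·α ≡ 0 (mod 2) for all r ∈ R and α ∈ A. Then f admits a representation f = Σ_{l=1}^p (σ_{l,0} + Σ_{j∈J_l} σ_{l,j} g_j) where each σ_{l,j} is SOS in the variables x(I_l) and every exponent α ∈ supp(σ_{l,j}) satisfies r·α ≡ 0 (mod 2) for all r ∈ R. -/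
/-!
Grade `ℝ[x]` by `α ↦ (r · α mod 2)_{r ∈ R}`, an elementary abelian 2-group. Projecting onto the
degree-zero component is linear and commutes with multiplication by the degree-zero polynomials
`g j`, and it fixes `f`; it only shrinks supports. Since `m + m' = 0` forces `m = m'` in such a
group, the degree-zero part of `h²` is the sum of the squares of the homogeneous components of
`h`, so the projection maps sums of squares to sums of squares. Applying it to the given
certificate yields the sign-symmetric one.
-/

open MvPolynomial

theorem isSumSq_iff_exists_fin_sum_sq {R : Type*} [CommSemiring R] {s : R} :
    IsSumSq s ↔ ∃ (k : ℕ) (h : Fin k → R), s = ∑ i, h i ^ 2 := by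
  constructor
  · intro hs
    induction hs with
    | zero => exact ⟨0, Fin.elim0, by simp⟩
    | sq_add a _ ih =>
      obtain ⟨k, h, rfl⟩ := ih
      exact ⟨k + 1, Fin.cons a h, by simp [Fin.sum_univ_succ, sq]⟩
  · rintro ⟨k, h, rfl⟩
    exact IsSumSq.sum_sq _ _

namespace MvPolynomial

variable {σ R M : Type*} [CommSemiring R]

section AddCommMonoid

variable [AddCommMonoid M] {w : σ → M}

theorem sum_weightedHomogeneousComponent_image_weight [DecidableEq M] (φ : MvPolynomial σ R) :
    ∑ m ∈ φ.support.image (Finsupp.weight w), weightedHomogeneousComponent w m φ = φ := by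
  conv_rhs => rw [← sum_weightedHomogeneousComponent w φ]
  refine (finsum_eq_sum_of_support_subset _ fun m hm => ?_).symm
  by_contra h
  exact hm (weightedHomogeneousComponent_eq_zero_of_notMem w φ m h)

end AddCommMonoid

theorem IsWeightedHomogeneous.weightedHomogeneousComponent_add_mul_right
    [AddCancelCommMonoid M] {w : σ → M} {ψ : MvPolynomial σ R} {n : M}
    (hψ : IsWeightedHomogeneous w ψ n) (m : M) (φ : MvPolynomial σ R) :
    weightedHomogeneousComponent w (m + n) (φ * ψ) = weightedHomogeneousComponent w m φ * ψ := by
  classical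
  let := weightedGradedAlgebra R w
  rw [← weightedDecomposition.decompose'_apply, ← weightedDecomposition.decompose'_apply]
  exact DirectSum.coe_decompose_mul_add_of_right_mem (weightedHomogeneousSubmodule R w)
    ((mem_weightedHomogeneousSubmodule _ _ _ _).2 hψ)

section ZModTwo

variable [AddCommGroup M] [Module (ZMod 2) M] {w : σ → M}

theorem weightedHomogeneousComponent_zero_mul_self [DecidableEq M] (φ : MvPolynomial σ R) :
    weightedHomogeneousComponent w 0 (φ * φ) =
      ∑ m ∈ φ.support.image (Finsupp.weight w),
        weightedHomogeneousComponent w m φ * weightedHomogeneousComponent w m φ := by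
  have hcross : ∀ m m' : M, weightedHomogeneousComponent w 0
      (weightedHomogeneousComponent w m φ * weightedHomogeneousComponent w m' φ) =
        if m = m' then weightedHomogeneousComponent w m φ * weightedHomogeneousComponent w m' φ
        else 0 := by
    intro m m'
    have hom := (weightedHomogeneousComponent_isWeightedHomogeneous (w := w) m φ).mul
      (weightedHomogeneousComponent_isWeightedHomogeneous m' φ)
    rw [weightedHomogeneousComponent_of_mem hom]
    simp only [eq_comm (a := (0 : M)), add_eq_zero_iff_eq_neg, ZModModule.neg_eq_self]
  conv_lhs => rw [← sum_weightedHomogeneousComponent_image_weight (w := w) φ, Finset.sum_mul_sum]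
  simp only [map_sum, hcross, Finset.sum_ite_eq]
  exact Finset.sum_congr rfl fun m hm => if_pos hm

theorem IsSumSq.weightedHomogeneousComponent_zero {s : MvPolynomial σ R} (hs : IsSumSq s) :
    IsSumSq (weightedHomogeneousComponent w 0 s) := by
  classical
  induction hs with
  | zero => simp
  | sq_add a _ ih =>
    rw [map_add, weightedHomogeneousComponent_zero_mul_self]
    exact .add (.sum_mul_self _ _) ih

end ZModTwo

end MvPolynomial

def signWeight {σ : Type*} (R : Set (σ → ZMod 2)) (i : σ) (r : R) : ZMod 2 := r.1 i

theorem weight_signWeight_apply {σ : Type*} [Fintype σ] (R : Set (σ → ZMod 2)) (α : σ →₀ ℕ)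
    (r : R) : Finsupp.weight (signWeight R) α r = ∑ i, r.1 i * ((α i : ℕ) : ZMod 2) := by
  rw [Finsupp.weight_apply, Finsupp.sum_fintype _ _ fun i => zero_smul ℕ (signWeight R i),
    Finset.sum_apply]
  simp only [Pi.smul_apply, signWeight, nsmul_eq_mul, mul_comm]

theorem weight_signWeight_eq_zero_iff {σ : Type*} [Fintype σ] (R : Set (σ → ZMod 2))
    (α : σ →₀ ℕ) :
    Finsupp.weight (signWeight R) α = 0 ↔ ∀ r ∈ R, ∑ i, r i * ((α i : ℕ) : ZMod 2) = 0 := by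
  simp only [funext_iff, weight_signWeight_apply, Pi.zero_apply, Subtype.forall]

theorem sparse_representation_sign_symmetric_general (n p m : ℕ)
    (f : MvPolynomial (Fin n) ℝ) (g : Fin m → MvPolynomial (Fin n) ℝ)
    (I : Fin p → Set (Fin n)) (J : Fin p → Finset (Fin m))
    (R : Set (Fin n → ZMod 2))
    (hsymf : ∀ r ∈ R, ∀ α ∈ f.support, ∑ i, r i * ((α i : ℕ) : ZMod 2) = 0)
    (hsymg : ∀ r ∈ R, ∀ j : Fin m, ∀ α ∈ (g j).support,
      ∑ i, r i * ((α i : ℕ) : ZMod 2) = 0)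
    (σ0' : Fin p → MvPolynomial (Fin n) ℝ)
    (σ' : Fin p → Fin m → MvPolynomial (Fin n) ℝ)
    (hrep : f = ∑ l, (σ0' l + ∑ j ∈ J l, σ' l j * g j))
    (hsos0 : ∀ l, (∃ (k : ℕ) (h : Fin k → MvPolynomial (Fin n) ℝ),
        σ0' l = ∑ i, h i ^ 2) ∧ ∀ α ∈ (σ0' l).support, ∀ i, α i ≠ 0 → i ∈ I l)
    (hsos : ∀ l, ∀ j ∈ J l, (∃ (k : ℕ) (h : Fin k → MvPolynomial (Fin n) ℝ),
        σ' l j = ∑ i, h i ^ 2) ∧ ∀ α ∈ (σ' l j).support, ∀ i, α i ≠ 0 → i ∈ I l) :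
    ∃ (σ0 : Fin p → MvPolynomial (Fin n) ℝ)
      (σ : Fin p → Fin m → MvPolynomial (Fin n) ℝ),
      f = ∑ l, (σ0 l + ∑ j ∈ J l, σ l j * g j) ∧
      (∀ l, (∃ (k : ℕ) (h : Fin k → MvPolynomial (Fin n) ℝ), σ0 l = ∑ i, h i ^ 2) ∧
        (∀ α ∈ (σ0 l).support, ∀ i, α i ≠ 0 → i ∈ I l) ∧
        ∀ α ∈ (σ0 l).support, ∀ r ∈ R, ∑ i, r i * ((α i : ℕ) : ZMod 2) = 0) ∧
      (∀ l, ∀ j ∈ J l, (∃ (k : ℕ) (h : Fin k → MvPolynomial (Fin n) ℝ),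
          σ l j = ∑ i, h i ^ 2) ∧
        (∀ α ∈ (σ l j).support, ∀ i, α i ≠ 0 → i ∈ I l) ∧
        ∀ α ∈ (σ l j).support, ∀ r ∈ R, ∑ i, r i * ((α i : ℕ) : ZMod 2) = 0) := by
  classical
  let Pr := weightedHomogeneousComponent (R := ℝ) (signWeight R) 0
  have homogeneous_zero : ∀ {φ : MvPolynomial (Fin n) ℝ},
      (∀ r ∈ R, ∀ α ∈ φ.support, ∑ i, r i * ((α i : ℕ) : ZMod 2) = 0) →
        IsWeightedHomogeneous (signWeight R) φ 0 := fun hφ α hα =>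
    (weight_signWeight_eq_zero_iff R α).2 fun r hr => hφ r hr α (mem_support_iff.2 hα)
  have Pr_mul_g (j : Fin m) (φ : MvPolynomial (Fin n) ℝ) : Pr (φ * g j) = Pr φ * g j := by
    simpa using (homogeneous_zero (hsymg · · j)).weightedHomogeneousComponent_add_mul_right 0 φ
  have Pr_spec {s : MvPolynomial (Fin n) ℝ} {V : Set (Fin n)}
      (hs : (∃ (k : ℕ) (h : Fin k → MvPolynomial (Fin n) ℝ), s = ∑ i, h i ^ 2) ∧
        ∀ α ∈ s.support, ∀ i, α i ≠ 0 → i ∈ V) :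
      (∃ (k : ℕ) (h : Fin k → MvPolynomial (Fin n) ℝ), Pr s = ∑ i, h i ^ 2) ∧
        (∀ α ∈ (Pr s).support, ∀ i, α i ≠ 0 → i ∈ V) ∧
        ∀ α ∈ (Pr s).support, ∀ r ∈ R, ∑ i, r i * ((α i : ℕ) : ZMod 2) = 0 := by
    refine ⟨isSumSq_iff_exists_fin_sum_sq.1
      (isSumSq_iff_exists_fin_sum_sq.2 hs.1).weightedHomogeneousComponent_zero, ?_⟩
    simp only [Pr, support_weightedHomogeneousComponent, Finset.mem_filter,
      weight_signWeight_eq_zero_iff]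
    exact ⟨fun α hα => hs.2 α hα.1, fun α hα => hα.2⟩
  refine ⟨fun l => Pr (σ0' l), fun l j => Pr (σ' l j), ?_, fun l => Pr_spec (hsos0 l),
    fun l j hj => Pr_spec (hsos l j hj)⟩
  calc f = Pr f := (weightedHomogeneousComponent_eq_self (homogeneous_zero hsymf)).symm
    _ = _ := by simp only [hrep, map_sum, map_add, Pr_mul_g]

/-- Sparse representation with sign symmetries: if `f` has a correlatively sparse
SOS representation and `R` is a set of sign symmetries of the supports of `f` and the
`g j`, then `f` has such a representation in which every SOS multiplier is supported
only on exponents respecting all sign symmetries in `R`. -/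
theorem sparse_representation_sign_symmetric (n p m : ℕ)
    (f : MvPolynomial (Fin n) ℝ) (g : Fin m → MvPolynomial (Fin n) ℝ)
    (I : Fin p → Set (Fin n)) (J : Fin p → Finset (Fin m))
    (hvar : ∀ l, ∀ j ∈ J l, ∀ α ∈ (g j).support, ∀ i, α i ≠ 0 → i ∈ I l)
    (R : Set (Fin n → ZMod 2))
    (hsymf : ∀ r ∈ R, ∀ α ∈ f.support, ∑ i, r i * ((α i : ℕ) : ZMod 2) = 0)
    (hsymg : ∀ r ∈ R, ∀ j : Fin m, ∀ α ∈ (g j).support,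
      ∑ i, r i * ((α i : ℕ) : ZMod 2) = 0)
    (σ0' : Fin p → MvPolynomial (Fin n) ℝ)
    (σ' : Fin p → Fin m → MvPolynomial (Fin n) ℝ)
    (hrep : f = ∑ l, (σ0' l + ∑ j ∈ J l, σ' l j * g j))
    (hsos0 : ∀ l, (∃ (k : ℕ) (h : Fin k → MvPolynomial (Fin n) ℝ),
        σ0' l = ∑ i, h i ^ 2) ∧ ∀ α ∈ (σ0' l).support, ∀ i, α i ≠ 0 → i ∈ I l)
    (hsos : ∀ l, ∀ j ∈ J l, (∃ (k : ℕ) (h : Fin k → MvPolynomial (Fin n) ℝ),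
        σ' l j = ∑ i, h i ^ 2) ∧ ∀ α ∈ (σ' l j).support, ∀ i, α i ≠ 0 → i ∈ I l) :
    ∃ (σ0 : Fin p → MvPolynomial (Fin n) ℝ)
      (σ : Fin p → Fin m → MvPolynomial (Fin n) ℝ),
      f = ∑ l, (σ0 l + ∑ j ∈ J l, σ l j * g j) ∧
      (∀ l, (∃ (k : ℕ) (h : Fin k → MvPolynomial (Fin n) ℝ), σ0 l = ∑ i, h i ^ 2) ∧
        (∀ α ∈ (σ0 l).support, ∀ i, α i ≠ 0 → i ∈ I l) ∧
        ∀ α ∈ (σ0 l).support, ∀ r ∈ R, ∑ i, r i * ((α i : ℕ) : ZMod 2) = 0) ∧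
      (∀ l, ∀ j ∈ J l, (∃ (k : ℕ) (h : Fin k → MvPolynomial (Fin n) ℝ),
          σ l j = ∑ i, h i ^ 2) ∧
        (∀ α ∈ (σ l j).support, ∀ i, α i ≠ 0 → i ∈ I l) ∧
        ∀ α ∈ (σ l j).support, ∀ r ∈ R, ∑ i, r i * ((α i : ℕ) : ZMod 2) = 0) :=
  sparse_representation_sign_symmetric_general n p m f g I J R hsymf hsymg σ0' σ' hrep hsos0 hsos
end
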